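/- arXiv:math/9912080 — 4 statements merged into one kernel-verified Lean document; each statement's English description precedes it below -/
import Mathlib

section
/- Let n ≥ 1, let E ⊆ ℂⁿ be a compact set with μH[2](E) = 0, and let z ∈ ℂⁿ with z ∉ E. Then there exists a nonzero vector v ∈ ℂⁿ such that for every x ∈ E one has Σ_{i=1}^{n} v_i·(x_i − z_i) ≠ 0. In other words, there is an affine-linear polynomial Q(x) = Σ v_i(x_i − z_i) on ℂⁿ, of degree at most 1, with Q(z) = 0 whose zero set (a complex hyperplane through z) does not meet E. -/
open MeasureTheory

noncomputable instance euclideanComplexMeasurableSpace (n : ℕ) :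
    MeasurableSpace (EuclideanSpace ℂ (Fin n)) := borel _

instance euclideanComplexBorelSpace (n : ℕ) :
    BorelSpace (EuclideanSpace ℂ (Fin n)) := ⟨rfl⟩

open Metric Set

/-- Lipschitz-on images of 2-null sets are 2-null. -/
lemma lipOn_image_null {X Y : Type*} [EMetricSpace X] [MeasurableSpace X] [BorelSpace X]
    [EMetricSpace Y] [MeasurableSpace Y] [BorelSpace Y]
    {K : NNReal} {f : X → Y} {s : Set X} (h : LipschitzOnWith K f s)
    (hs : μH[2] s = 0) : μH[2] (f '' s) = 0 := by
  have := h.hausdorffMeasure_image_le (d := 2) (by norm_num)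
  rw [hs, mul_zero] at this
  exact le_antisymm this (zero_le)

lemma hausdorff_univ_complex_ne_zero : μH[2] (univ : Set ℂ) ≠ 0 := by
  intro h
  have lip : LipschitzWith 1 (fun z : ℂ => (z.re, z.im)) := by
    apply LipschitzWith.of_dist_le_mul
    intro x y
    simp only [NNReal.coe_one, one_mul, Prod.dist_eq]
    apply max_le
    · rw [Real.dist_eq, ← Complex.sub_re]
      exact (Complex.abs_re_le_norm _).trans_eq (Complex.dist_eq _ _).symm
    · rw [Real.dist_eq, ← Complex.sub_im]
      exact (Complex.abs_im_le_norm _).trans_eq (Complex.dist_eq _ _).symm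
  have hsurj : (fun z : ℂ => (z.re, z.im)) '' univ = univ := by
    apply eq_univ_of_forall
    rintro ⟨a, b⟩
    exact ⟨⟨a, b⟩, mem_univ _, rfl⟩
  have h2 : μH[2] ((fun z : ℂ => (z.re, z.im)) '' univ) = 0 :=
    lipOn_image_null lip.lipschitzOnWith h
  rw [hsurj, hausdorffMeasure_prod_real] at h2
  have : volume (ball (0 : ℝ × ℝ) 1) ≠ 0 := (measure_ball_pos _ _ one_pos).ne'
  exact this (measure_mono_null (subset_univ _) h2)

lemma coord_dist_le {n : ℕ} (u v : EuclideanSpace ℂ (Fin n)) (i : Fin n) :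
    dist (u i) (v i) ≤ dist u v := by
  rw [EuclideanSpace.dist_eq]
  rw [show dist (u i) (v i) = Real.sqrt (dist (u i) (v i) ^ 2) from
    (Real.sqrt_sq dist_nonneg).symm]
  apply Real.sqrt_le_sqrt
  exact Finset.single_le_sum (f := fun j => dist (u j) (v j) ^ 2)
    (fun j _ => sq_nonneg _) (Finset.mem_univ i)

lemma coord_norm_le {n : ℕ} (u : EuclideanSpace ℂ (Fin n)) (i : Fin n) :
    ‖u i‖ ≤ ‖u‖ := by
  have := coord_dist_le u 0 i
  simpa [dist_zero_right] using this

set_option maxHeartbeats 1000000 in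
lemma aux_avoid (n : ℕ) :
    ∀ E : Set (EuclideanSpace ℂ (Fin n)), IsCompact E → μH[2] E = 0 →
      (0 : EuclideanSpace ℂ (Fin n)) ∉ E →
      ∃ v : EuclideanSpace ℂ (Fin n), ∀ u ∈ E, (∑ i : Fin n, v i * u i) ≠ 0 := by
  induction n with
  | zero =>
    intro E _ _ h0
    refine ⟨0, fun u hu => absurd hu ?_⟩
    rwa [Subsingleton.elim u 0]
  | succ n ih =>
    intro E hEc hE2 h0
    set L : Fin (n + 1) := Fin.last n with hLdef
    -- evaluation at last coordinate is 1-Lipschitz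
    have evalLip : LipschitzWith 1 (fun u : EuclideanSpace ℂ (Fin (n+1)) => u L) := by
      apply LipschitzWith.of_dist_le_mul
      intro u v
      simp only [NNReal.coe_one, one_mul]
      exact coord_dist_le u v L
    -- projection to first n coordinates
    set π : EuclideanSpace ℂ (Fin (n+1)) → EuclideanSpace ℂ (Fin n) :=
      fun u => WithLp.toLp 2 (fun i : Fin n => u i.castSucc) with hπdef
    have πlip : LipschitzWith 1 π := by
      apply LipschitzWith.of_dist_le_mul
      intro u v
      simp only [NNReal.coe_one, one_mul]
      rw [EuclideanSpace.dist_eq, EuclideanSpace.dist_eq]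
      apply Real.sqrt_le_sqrt
      rw [Fin.sum_univ_castSucc (f := fun j => dist (u j) (v j) ^ 2)]
      exact le_add_of_nonneg_right (sq_nonneg _)
    -- the slice where the last coordinate vanishes
    set E₀ : Set (EuclideanSpace ℂ (Fin (n+1))) := E ∩ {u | u L = 0} with hE₀def
    have hE₀c : IsCompact E₀ :=
      hEc.inter_right (isClosed_eq evalLip.continuous continuous_const)
    have hF2 : μH[2] (π '' E₀) = 0 :=
      lipOn_image_null πlip.lipschitzOnWith (measure_mono_null inter_subset_left hE2)
    have hF0 : (0 : EuclideanSpace ℂ (Fin n)) ∉ π '' E₀ := by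
      rintro ⟨u, ⟨huE, huL⟩, hπu⟩
      apply h0
      have hu0 : u = 0 := by
        ext j
        refine Fin.lastCases ?_ ?_ j
        · exact huL
        · intro i
          exact congrFun (congrArg WithLp.ofLp hπu) i
      rwa [hu0] at huE
    obtain ⟨w, hw⟩ := ih (π '' E₀) (hE₀c.image πlip.continuous) hF2 hF0
    -- the partial sum
    set S : EuclideanSpace ℂ (Fin (n+1)) → ℂ :=
      fun u => ∑ i : Fin n, w i * u i.castSucc with hSdef
    have hS0 : ∀ u ∈ E₀, S u ≠ 0 := by
      intro u hu
      exact hw (π u) ⟨u, hu, rfl⟩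
    -- bounds
    obtain ⟨M₀, hM₀⟩ := hEc.isBounded.exists_norm_le
    set M : ℝ := max M₀ 1 with hMdef
    have hM : ∀ u ∈ E, ‖u‖ ≤ M := fun u hu => (hM₀ u hu).trans (le_max_left _ _)
    have hM1 : (1:ℝ) ≤ M := le_max_right _ _
    set W : ℝ := (∑ i : Fin n, ‖w i‖) + 1 with hWdef
    have hW1 : (1:ℝ) ≤ W := le_add_of_nonneg_left (Finset.sum_nonneg fun i _ => norm_nonneg _)
    have hW0 : (0:ℝ) < W := lt_of_lt_of_le one_pos hW1
    have hSlip : ∀ u v : EuclideanSpace ℂ (Fin (n+1)), ‖S u - S v‖ ≤ W * dist u v := by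
      intro u v
      have : S u - S v = ∑ i : Fin n, w i * (u i.castSucc - v i.castSucc) := by
        rw [hSdef]
        rw [← Finset.sum_sub_distrib]
        congr 1; funext i; ring
      rw [this]
      calc ‖∑ i : Fin n, w i * (u i.castSucc - v i.castSucc)‖
          ≤ ∑ i : Fin n, ‖w i * (u i.castSucc - v i.castSucc)‖ := norm_sum_le _ _
        _ ≤ ∑ i : Fin n, ‖w i‖ * dist u v := by
            apply Finset.sum_le_sum
            intro i _
            rw [norm_mul]
            have h := coord_dist_le u v i.castSucc
            rw [dist_eq_norm] at h
            exact mul_le_mul_of_nonneg_left h (norm_nonneg _)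
        _ = (∑ i : Fin n, ‖w i‖) * dist u v := by rw [Finset.sum_mul]
        _ ≤ W * dist u v := by
            apply mul_le_mul_of_nonneg_right _ dist_nonneg
            rw [hWdef]; linarith
    have hSbound : ∀ u ∈ E, ‖S u‖ ≤ W * M := by
      intro u hu
      calc ‖S u‖ ≤ ∑ i : Fin n, ‖w i * u i.castSucc‖ := norm_sum_le _ _
        _ ≤ ∑ i : Fin n, ‖w i‖ * M := by
            apply Finset.sum_le_sum
            intro i _
            rw [norm_mul]
            exact mul_le_mul_of_nonneg_left
              ((coord_norm_le u i.castSucc).trans (hM u hu)) (norm_nonneg _)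
        _ = (∑ i : Fin n, ‖w i‖) * M := by rw [Finset.sum_mul]
        _ ≤ W * M := by
            apply mul_le_mul_of_nonneg_right _ (le_trans zero_le_one hM1)
            rw [hWdef]; linarith
    -- the bad set
    set Φ : EuclideanSpace ℂ (Fin (n+1)) → ℂ := fun u => -(S u / u L) with hΦdef
    set Ek : ℕ → Set (EuclideanSpace ℂ (Fin (n+1))) :=
      fun k => E ∩ {u | ((k:ℝ)+1)⁻¹ ≤ ‖u L‖} with hEkdef
    have hEkpos : ∀ (k : ℕ), (0:ℝ) < ((k:ℝ)+1)⁻¹ := by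
      intro k; positivity
    have hΦlip : ∀ k : ℕ, LipschitzOnWith
        (Real.toNNReal (((k:ℝ)+1)^2 * (2 * W * M))) Φ (Ek k) := by
      intro k
      rw [lipschitzOnWith_iff_dist_le_mul]
      intro u hu v hv
      have huL : ((k:ℝ)+1)⁻¹ ≤ ‖u L‖ := hu.2
      have hvL : ((k:ℝ)+1)⁻¹ ≤ ‖v L‖ := hv.2
      have huL0 : u L ≠ 0 := by
        intro h; rw [h, norm_zero] at huL; exact absurd huL (not_le.mpr (hEkpos k))
      have hvL0 : v L ≠ 0 := by
        intro h; rw [h, norm_zero] at hvL; exact absurd hvL (not_le.mpr (hEkpos k))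
      have key : S u / u L - S v / v L = (S u * v L - S v * u L) / (u L * v L) := by
        field_simp
      have hnum : ‖S u * v L - S v * u L‖ ≤ 2 * W * M * dist u v := by
        have hrw : S u * v L - S v * u L = (S u - S v) * v L + S v * (v L - u L) := by ring
        rw [hrw]
        calc ‖(S u - S v) * v L + S v * (v L - u L)‖
            ≤ ‖(S u - S v) * v L‖ + ‖S v * (v L - u L)‖ := norm_add_le _ _
          _ = ‖S u - S v‖ * ‖v L‖ + ‖S v‖ * ‖v L - u L‖ := by rw [norm_mul, norm_mul]
          _ ≤ (W * dist u v) * M + (W * M) * dist u v := by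
              apply add_le_add
              · exact mul_le_mul (hSlip u v) ((coord_norm_le v L).trans (hM v hv.1))
                  (norm_nonneg _) (mul_nonneg (le_of_lt hW0) dist_nonneg)
              · apply mul_le_mul (hSbound v hv.1) _ (norm_nonneg _)
                  (mul_nonneg (le_of_lt hW0) (le_trans zero_le_one hM1))
                have h := coord_dist_le u v L
                rw [dist_eq_norm] at h
                calc ‖v L - u L‖ = ‖u L - v L‖ := norm_sub_rev _ _
                  _ ≤ dist u v := h
          _ = 2 * W * M * dist u v := by ring
      have hden : (((k:ℝ)+1)^2)⁻¹ ≤ ‖u L * v L‖ := by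
        rw [norm_mul, sq, mul_inv]
        exact mul_le_mul huL hvL (le_of_lt (hEkpos k)) (norm_nonneg _)
      have hΦeq : dist (Φ u) (Φ v) = ‖S u * v L - S v * u L‖ / ‖u L * v L‖ := by
        rw [dist_eq_norm]
        have hsub : Φ u - Φ v = -((S u * v L - S v * u L) / (u L * v L)) := by
          show -(S u / u L) - -(S v / v L) = _
          rw [← key]
          ring
        rw [hsub, norm_neg, norm_div]
      have hdpos : (0:ℝ) < ‖u L * v L‖ :=
        lt_of_lt_of_le (by positivity) hden
      have hWM : (0:ℝ) < 2 * W * M :=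
        mul_pos (mul_pos two_pos hW0) (lt_of_lt_of_le one_pos hM1)
      have hKpos : (0:ℝ) ≤ ((k:ℝ)+1)^2 * (2 * W * M) :=
        le_of_lt (mul_pos (by positivity) hWM)
      rw [hΦeq, Real.coe_toNNReal _ hKpos, div_le_iff₀ hdpos]
      calc ‖S u * v L - S v * u L‖ ≤ 2 * W * M * dist u v := hnum
        _ = (((k:ℝ)+1)^2 * (2 * W * M)) * dist u v * (((k:ℝ)+1)^2)⁻¹ := by
            field_simp
        _ ≤ (((k:ℝ)+1)^2 * (2 * W * M)) * dist u v * ‖u L * v L‖ := by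
            apply mul_le_mul_of_nonneg_left hden
            exact mul_nonneg (mul_nonneg (by positivity) (le_of_lt hWM)) dist_nonneg
    -- the bad set is Hausdorff-2-null, hence we may choose t outside it
    set B : Set ℂ := ⋃ k : ℕ, Φ '' (Ek k) with hBdef
    have hB : μH[2] B = 0 :=
      measure_iUnion_null fun k =>
        lipOn_image_null (hΦlip k) (measure_mono_null inter_subset_left hE2)
    have hextt : ∃ t : ℂ, t ∉ B := by
      by_contra h
      push_neg at h
      exact hausdorff_univ_complex_ne_zero
        (measure_mono_null (fun t _ => h t) hB)
    obtain ⟨t, ht⟩ := hextt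
    refine ⟨WithLp.toLp 2 (Fin.snoc (fun i => w i) t : Fin (n+1) → ℂ), ?_⟩
    intro u hu
    rw [Fin.sum_univ_castSucc]
    simp only [PiLp.toLp_apply, Fin.snoc_castSucc, Fin.snoc_last]
    by_cases hz : u (Fin.last n) = 0
    · rw [hz, mul_zero, add_zero]
      exact hw (π u) ⟨u, ⟨hu, hz⟩, rfl⟩
    · intro heq
      have hnormpos : 0 < ‖u (Fin.last n)‖ := norm_pos_iff.mpr hz
      obtain ⟨k, hk⟩ := exists_nat_gt ‖u (Fin.last n)‖⁻¹
      have h1 : ‖u (Fin.last n)‖⁻¹ < (k:ℝ) + 1 := lt_of_lt_of_le hk (le_of_lt (lt_add_one _))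
      have hk' : ((k:ℝ)+1)⁻¹ ≤ ‖u (Fin.last n)‖ := by
        rw [inv_le_comm₀ (by positivity) hnormpos]
        exact le_of_lt h1
      apply ht
      have hSu : S u + t * u (Fin.last n) = 0 := heq
      have htval : t = Φ u := by
        show t = -(S u / u (Fin.last n))
        field_simp
        linear_combination hSu
      rw [htval]
      exact mem_iUnion.mpr ⟨k, mem_image_of_mem _ ⟨hu, hk'⟩⟩

/-- If `E ⊆ ℂⁿ` is compact with `μH[2] E = 0` and `z ∉ E`, then there is a complex
hyperplane through `z` (the zero set of an affine-linear polynomial `Q(x) = ∑ vᵢ (xᵢ - zᵢ)`)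
which does not meet `E`. -/
theorem exists_hyperplane_avoiding_null_set (n : ℕ) (hn : 1 ≤ n)
    (E : Set (EuclideanSpace ℂ (Fin n))) (hE : IsCompact E)
    (hEnull : μH[2] E = 0)
    (z : EuclideanSpace ℂ (Fin n)) (hz : z ∉ E) :
    ∃ v : EuclideanSpace ℂ (Fin n), v ≠ 0 ∧
      ∀ x ∈ E, (∑ i : Fin n, v i * (x i - z i)) ≠ 0 := by
  rcases E.eq_empty_or_nonempty with hemp | ⟨x₀, hx₀⟩
  · refine ⟨EuclideanSpace.single ⟨0, hn⟩ 1, ?_, ?_⟩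
    · intro h
      have h1 : (EuclideanSpace.single (⟨0, hn⟩ : Fin n) (1:ℂ)) ⟨0, hn⟩ = 0 := by
        rw [h]; rfl
      rw [EuclideanSpace.single_apply, if_pos rfl] at h1
      exact one_ne_zero h1
    · intro x hx
      rw [hemp] at hx
      exact absurd hx (notMem_empty x)
  · have hsub : LipschitzWith 1 (fun x : EuclideanSpace ℂ (Fin n) => x - z) := by
      apply LipschitzWith.of_dist_le_mul
      intro a b
      simp only [NNReal.coe_one, one_mul]
      exact le_of_eq (dist_sub_right a b z)
    have hE'c : IsCompact ((fun x => x - z) '' E) :=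
      hE.image (continuous_id.sub continuous_const)
    have hE'2 : μH[2] ((fun x => x - z) '' E) = 0 :=
      lipOn_image_null hsub.lipschitzOnWith hEnull
    have h0' : (0 : EuclideanSpace ℂ (Fin n)) ∉ (fun x => x - z) '' E := by
      rintro ⟨x, hx, hxz⟩
      apply hz
      rwa [sub_eq_zero.mp hxz] at hx
    obtain ⟨v, hv⟩ := aux_avoid n _ hE'c hE'2 h0'
    refine ⟨v, ?_, ?_⟩
    · intro h
      apply hv (x₀ - z) ⟨x₀, hx₀, rfl⟩
      rw [h]
      simp
    · intro x hx
      have := hv (x - z) ⟨x, hx, rfl⟩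
      simpa using this
end

section
/- Let n ≥ 1, let K ⊆ ℂⁿ be compact, let H ⊆ ℂⁿ be compact with μH[2](H) = 0, and let P, Q : ℂⁿ → ℂ be entire functions such that P(x) ≠ 0 for every x ∈ K, and such that P and Q have no common zero on H (i.e. for every x ∈ H, if P(x) = 0 then Q(x) ≠ 0). Then for every ε > 0 there exists α ∈ ℂ with |α| < ε such that P(x) + α·Q(x) ≠ 0 for every x ∈ K ∪ H. -/
open MeasureTheory Metric Set
open scoped NNReal ENNReal

/-- A function differentiable (over ℝ) at every point of a `μH[2]`-null set `S`
maps `S` to a `μH[2]`-null set. -/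
lemma null_image_of_differentiableAt {E : Type*} [NormedAddCommGroup E] [NormedSpace ℝ E]
    [MeasurableSpace E] [BorelSpace E] [SecondCountableTopology E]
    (f : E → ℂ) (S : Set E) (hf : ∀ x ∈ S, DifferentiableAt ℝ f x)
    (hS : μH[2] S = 0) : μH[2] (f '' S) = 0 := by
  obtain ⟨D, hDc, hDd⟩ := TopologicalSpace.exists_countable_dense E
  set A : ℕ → Set E := fun k =>
    {x ∈ S | ∀ y, dist y x ≤ 1 / (k + 1) → dist (f y) (f x) ≤ (k + 1) * dist y x} with hA
  have hcover : S ⊆ ⋃ (k : ℕ) (c ∈ D), A k ∩ ball c (1 / (2 * (k + 1))) := by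
    intro x hx
    -- pointwise Lipschitz bound from differentiability
    obtain ⟨C, hC⟩ := ((hf x hx).hasFDerivAt.isBigO_sub).bound
    rw [Metric.eventually_nhds_iff] at hC
    obtain ⟨r, hr, hball⟩ := hC
    obtain ⟨k, hk⟩ := exists_nat_gt (max C (1 / r))
    have hk1 : (0:ℝ) < k + 1 := by positivity
    have hxA : x ∈ A k := by
      refine ⟨hx, fun y hy => ?_⟩
      have hyr : dist y x < r := by
        have h1 : 1 / r < (k:ℝ) + 1 :=
          lt_of_le_of_lt (le_max_right _ _) (hk.trans (lt_add_one _))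
        have h2 : 1 < ((k:ℝ) + 1) * r := (div_lt_iff₀ hr).mp h1
        calc dist y x ≤ 1 / (k + 1) := hy
          _ < r := by rw [div_lt_iff₀ hk1]; exact mul_comm ((k:ℝ)+1) r ▸ h2
      have := hball hyr
      simp only [dist_eq_norm] at *
      calc ‖f y - f x‖ ≤ C * ‖y - x‖ := this
        _ ≤ ((k:ℝ) + 1) * ‖y - x‖ := by
            apply mul_le_mul_of_nonneg_right _ (norm_nonneg _)
            exact (le_max_left C (1/r)).trans (hk.trans (lt_add_one _)).le
    obtain ⟨c, hcD, hc⟩ := hDd.exists_dist_lt x (by positivity : (0:ℝ) < 1 / (2 * (k + 1)))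
    exact mem_iUnion.2 ⟨k, mem_iUnion.2 ⟨c, mem_iUnion.2 ⟨hcD,
      hxA, by rwa [mem_ball]⟩⟩⟩
  have hnullpiece : ∀ (k : ℕ) (c : E), μH[2] (f '' (A k ∩ ball c (1 / (2 * (k + 1))))) = 0 := by
    intro k c
    have hk1 : (0:ℝ) < k + 1 := by positivity
    have hlip : LipschitzOnWith ((k:ℝ≥0) + 1) f (A k ∩ ball c (1 / (2 * (k + 1)))) := by
      rw [lipschitzOnWith_iff_dist_le_mul]
      rintro x ⟨hxA, hxB⟩ y ⟨hyA, hyB⟩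
      have hxy : dist y x ≤ 1 / (k + 1) := by
        have htri := dist_triangle y c x
        rw [mem_ball] at hxB hyB
        rw [dist_comm c x] at htri
        have h2 : (1:ℝ) / (2 * ((k:ℝ) + 1)) + 1 / (2 * ((k:ℝ) + 1)) = 1 / ((k:ℝ)+1) := by
          rw [← add_div, div_eq_div_iff (by positivity) (by positivity)]; ring
        calc dist y x ≤ dist y c + dist x c := htri
          _ ≤ 1 / (2 * ((k:ℝ) + 1)) + 1 / (2 * ((k:ℝ) + 1)) := by
              exact add_le_add hyB.le hxB.le
          _ = 1 / ((k:ℝ)+1) := h2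
      have := hxA.2 y hxy
      rw [dist_comm (f x) (f y), dist_comm x y]
      calc dist (f y) (f x) ≤ ((k:ℝ) + 1) * dist y x := this
        _ = (((k:ℝ≥0) + 1) : ℝ) * dist y x := by push_cast; ring
    have hb := hlip.hausdorffMeasure_image_le (by norm_num : (0:ℝ) ≤ 2)
    have hz : μH[2] (A k ∩ ball c (1 / (2 * (k + 1)))) = 0 :=
      le_antisymm (le_trans (measure_mono (fun x hx => hx.1.1)) hS.le) zero_le
    rw [hz, mul_zero] at hb
    exact le_antisymm hb zero_le
  have : μH[2] (f '' S) ≤ μH[2] (⋃ (k : ℕ) (c ∈ D), f '' (A k ∩ ball c (1 / (2 * (k + 1))))) := by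
    apply measure_mono
    rintro _ ⟨x, hx, rfl⟩
    obtain ⟨k, hk⟩ := mem_iUnion.1 (hcover hx)
    obtain ⟨c, hc⟩ := mem_iUnion.1 hk
    obtain ⟨hcD, hx'⟩ := mem_iUnion.1 hc
    exact mem_iUnion.2 ⟨k, mem_iUnion.2 ⟨c, mem_iUnion.2 ⟨hcD, ⟨x, hx', rfl⟩⟩⟩⟩
  have h0 : μH[2] (⋃ (k : ℕ) (c ∈ D), f '' (A k ∩ ball c (1 / (2 * (k + 1))))) = 0 := by
    refine measure_iUnion_null fun k => ?_
    exact (measure_biUnion_null_iff hDc).2 fun c _ => hnullpiece k c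
  exact le_antisymm (h0 ▸ this) zero_le

/-- If `P` is nonvanishing on the compact set `K`, `H` is compact with `μH[2] H = 0`,
and the entire functions `P`, `Q` have no common zero on `H`, then for every `ε > 0`
there exists `α` with `|α| < ε` such that `P + α Q` does not vanish on `K ∪ H`. -/
theorem exists_small_alpha_nonvanishing (n : ℕ) (hn : 1 ≤ n)
    (K H : Set (EuclideanSpace ℂ (Fin n)))
    (hK : IsCompact K) (hH : IsCompact H)
    (hHnull : μH[2] H = 0)
    (P Q : EuclideanSpace ℂ (Fin n) → ℂ)
    (hP : Differentiable ℂ P) (hQ : Differentiable ℂ Q)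
    (hPK : ∀ x ∈ K, P x ≠ 0)
    (hPQH : ∀ x ∈ H, P x = 0 → Q x ≠ 0) :
    ∀ ε > 0, ∃ α : ℂ, ‖α‖ < ε ∧
      ∀ x ∈ K ∪ H, P x + α * Q x ≠ 0 := by
  intro ε hε
  -- bound on |Q| over K ∪ H
  obtain ⟨M₀, hM₀⟩ := (hK.union hH).exists_bound_of_continuousOn
    ((hQ.continuous.continuousOn) : ContinuousOn Q (K ∪ H))
  set M : ℝ := max M₀ 0 with hM
  have hMnn : 0 ≤ M := le_max_right _ _
  have hQb : ∀ x ∈ K ∪ H, ‖Q x‖ ≤ M :=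
    fun x hx => le_trans (hM₀ x hx) (le_max_left _ _)
  -- lower bound for |P| on K
  have hc₁ : ∃ c > 0, ∀ x ∈ K, c ≤ ‖P x‖ := by
    rcases K.eq_empty_or_nonempty with h | hne
    · exact ⟨1, one_pos, by simp [h]⟩
    · obtain ⟨x₀, hx₀, hmin⟩ := hK.exists_isMinOn hne
        ((continuous_norm.comp hP.continuous).continuousOn)
      exact ⟨‖P x₀‖, by
        simpa [norm_pos_iff] using hPK x₀ hx₀, fun x hx => hmin hx⟩
  obtain ⟨c₁, hc₁pos, hc₁⟩ := hc₁
  -- lower bound for max(|P|,|Q|) on H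
  have hm : ∃ m > 0, ∀ x ∈ H, m ≤ max (‖P x‖) (‖Q x‖) := by
    rcases H.eq_empty_or_nonempty with h | hne
    · exact ⟨1, one_pos, by simp [h]⟩
    · obtain ⟨x₀, hx₀, hmin⟩ := hH.exists_isMinOn hne
        (((continuous_norm.comp hP.continuous).max
          (continuous_norm.comp hQ.continuous)).continuousOn)
      refine ⟨_, ?_, fun x hx => hmin hx⟩
      rcases eq_or_ne (P x₀) 0 with hP0 | hP0
      · exact lt_max_of_lt_right (by simpa [norm_pos_iff] using hPQH x₀ hx₀ hP0)
      · exact lt_max_of_lt_left (by simpa [norm_pos_iff] using hP0)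
  obtain ⟨m, hmpos, hm⟩ := hm
  -- the set H₁ where |Q| is not small, and the "bad" set B
  set H₁ : Set (EuclideanSpace ℂ (Fin n)) :=
    {x ∈ H | m / 2 ≤ ‖Q x‖} with hH₁
  set B : Set ℂ := (fun x => -P x / Q x) '' H₁ with hB
  have hH₁null : μH[2] H₁ = 0 :=
    le_antisymm (le_trans (measure_mono (fun x hx => hx.1)) hHnull.le) zero_le
  have hBnull : μH[2] B = 0 := by
    apply null_image_of_differentiableAt _ _ _ hH₁null
    intro x hx
    have hQx : Q x ≠ 0 := by
      intro h
      have := hx.2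
      rw [h] at this
      simp only [norm_zero] at this
      linarith
    have hd : DifferentiableAt ℂ (fun y => -P y / Q y) x := by
      have : DifferentiableAt ℂ (fun y => -P y * (Q y)⁻¹) x :=
        ((hP x).neg.mul ((hQ x).inv hQx))
      simpa [div_eq_mul_inv] using this
    exact hd.restrictScalars ℝ
  -- μH[2] on ℂ is a Haar measure
  have hHaar : (μH[2] : Measure ℂ).IsAddHaarMeasure := by
    have h2 : ((Module.finrank ℝ ℂ : ℝ)) = 2 := by
      rw [Complex.finrank_real_complex]; norm_num
    rw [← h2]; infer_instance
  haveI := hHaar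
  -- choose α in a small ball avoiding B
  set r : ℝ := min ε (min (c₁ / (M + 1)) (m / (2 * (M + 1)))) with hr
  have hrpos : 0 < r := by
    apply lt_min hε
    apply lt_min <;> positivity
  have hball : 0 < μH[2] (ball (0:ℂ) r) := measure_ball_pos _ _ hrpos
  have hne : (ball (0:ℂ) r \ B).Nonempty := by
    apply nonempty_of_measure_ne_zero (μ := (μH[2] : Measure ℂ))
    rw [measure_diff_null hBnull]
    exact hball.ne'
  obtain ⟨α, hαball, hαB⟩ := hne
  rw [mem_ball, dist_zero_right] at hαball
  have hαε : ‖α‖ < ε := lt_of_lt_of_le hαball (min_le_left _ _)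
  have hα₂ : ‖α‖ < c₁ / (M + 1) :=
    lt_of_lt_of_le hαball (le_trans (min_le_right _ _) (min_le_left _ _))
  have hα₃ : ‖α‖ < m / (2 * (M + 1)) :=
    lt_of_lt_of_le hαball (le_trans (min_le_right _ _) (min_le_right _ _))
  refine ⟨α, hαε, ?_⟩
  rintro x hx h0
  have hPQ : ‖P x‖ = ‖α‖ * ‖Q x‖ := by
    have : P x = -(α * Q x) := by linear_combination h0
    rw [this, norm_neg, norm_mul]
  have hQxb : ‖Q x‖ ≤ M := hQb x hx
  have hαnn : 0 ≤ ‖α‖ := norm_nonneg _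
  have hM1 : (0:ℝ) < M + 1 := by linarith
  rcases hx with hxK | hxH
  · -- x ∈ K
    have h1 : c₁ ≤ ‖P x‖ := hc₁ x hxK
    have h2 : ‖α‖ * (M + 1) < c₁ := (lt_div_iff₀ hM1).mp hα₂
    nlinarith [mul_le_mul_of_nonneg_left hQxb hαnn]
  · -- x ∈ H
    by_cases hQbig : m / 2 ≤ ‖Q x‖
    · -- x ∈ H₁ : then α would lie in B
      apply hαB
      refine ⟨x, ⟨hxH, hQbig⟩, ?_⟩
      have hQx : Q x ≠ 0 := by
        intro h; rw [h] at hQbig; simp only [norm_zero] at hQbig; linarith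
      field_simp
      linear_combination -h0
    · -- |Q x| small, so |P x| ≥ m
      push_neg at hQbig
      have hmax := hm x hxH
      have hPxm : m ≤ ‖P x‖ := by
        rcases le_max_iff.mp hmax with h | h
        · exact h
        · linarith
      have h2 : ‖α‖ * (2 * (M + 1)) < m := (lt_div_iff₀ (by linarith)).mp hα₃
      nlinarith [mul_le_mul_of_nonneg_left hQxb hαnn]
end

section
/- Let γ = (γ₁, γ₂) : ℝ → ℂ² be a continuously differentiable map that is periodic of period 1 (a closed C¹ curve in ℂ²). Let U := {(ξ, η) ∈ ℂ² : for all t ∈ [0,1], γ₂(t) − ξ − η·γ₁(t) ≠ 0}. Then U is an open subset of ℂ², and for every natural number i the function G_i(ξ, η) := (1/(2πi)) ∫₀¹ γ₁(t)^i · (γ₂′(t) − η·γ₁′(t)) / (γ₂(t) − ξ − η·γ₁(t)) dt is differentiable over ℂ (holomorphic) at every point of U. -/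
set_option maxHeartbeats 1000000

open MeasureTheory Metric Set

/-- For a closed `C¹` curve `γ = (γ₁, γ₂)` of period `1` in `ℂ²`, the set `U` of lines
`{z₂ = ξ + η z₁}` avoiding the curve is open, and the Dolbeault–Henkin functions
`G_i(ξ,η) = (1/2πi) ∫₀¹ γ₁ⁱ (γ₂' - η γ₁')/(γ₂ - ξ - η γ₁) dt` are holomorphic on `U`. -/
theorem dolbeault_henkin_holomorphic
    (γ₁ γ₂ : ℝ → ℂ) (hγ₁ : ContDiff ℝ 1 γ₁) (hγ₂ : ContDiff ℝ 1 γ₂)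
    (hper₁ : ∀ t, γ₁ (t + 1) = γ₁ t) (hper₂ : ∀ t, γ₂ (t + 1) = γ₂ t)
    (U : Set (ℂ × ℂ))
    (hU : U = {p : ℂ × ℂ | ∀ t ∈ Set.Icc (0:ℝ) 1, γ₂ t - p.1 - p.2 * γ₁ t ≠ 0})
    (G : ℕ → ℂ × ℂ → ℂ)
    (hG : ∀ i p, G i p = (1 / (2 * (Real.pi : ℂ) * Complex.I)) *
      ∫ t in (0:ℝ)..1,
        (γ₁ t) ^ i * (deriv γ₂ t - p.2 * deriv γ₁ t) / (γ₂ t - p.1 - p.2 * γ₁ t)) :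
    IsOpen U ∧ ∀ i : ℕ, ∀ p ∈ U, DifferentiableAt ℂ (G i) p := by
  have hc₁ : Continuous γ₁ := hγ₁.continuous
  have hc₂ : Continuous γ₂ := hγ₂.continuous
  have hd₁ : Continuous (deriv γ₁) := hγ₁.continuous_deriv le_rfl
  have hd₂ : Continuous (deriv γ₂) := hγ₂.continuous_deriv le_rfl
  have hQcont : Continuous (fun q : (ℂ × ℂ) × ℝ => γ₂ q.2 - q.1.1 - q.1.2 * γ₁ q.2) := by
    fun_prop
  -- key uniform nonvanishing on a closed ball
  have key : ∀ p₀ : ℂ × ℂ, (∀ t ∈ Set.Icc (0:ℝ) 1, γ₂ t - p₀.1 - p₀.2 * γ₁ t ≠ 0) →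
      ∃ ε > 0, ∀ x ∈ Metric.closedBall p₀ ε, ∀ t ∈ Set.Icc (0:ℝ) 1,
        γ₂ t - x.1 - x.2 * γ₁ t ≠ 0 := by
    intro p₀ hp₀
    have hW : IsOpen {q : (ℂ × ℂ) × ℝ | γ₂ q.2 - q.1.1 - q.1.2 * γ₁ q.2 ≠ 0} :=
      isOpen_compl_singleton.preimage hQcont
    obtain ⟨u, v, hu, hv, hpu, hIv, huv⟩ :=
      generalized_tube_lemma isCompact_singleton isCompact_Icc hW (by
        rintro ⟨a, b⟩ ⟨ha, hb⟩
        simp only [Set.mem_singleton_iff] at ha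
        subst ha
        exact hp₀ b hb)
    obtain ⟨r, hr, hball⟩ := Metric.isOpen_iff.mp hu p₀ (hpu rfl)
    refine ⟨r/2, by positivity, fun x hx t ht => ?_⟩
    have hxu : x ∈ u := hball (Metric.mem_ball.mpr
      (lt_of_le_of_lt (Metric.mem_closedBall.mp hx) (by linarith)))
    exact huv (Set.mk_mem_prod hxu (hIv ht))
  have hUopen : IsOpen U := by
    rw [hU, Metric.isOpen_iff]
    intro p hp
    obtain ⟨ε, hε, h⟩ := key p hp
    exact ⟨ε, hε, fun x hx => h x (Metric.ball_subset_closedBall hx)⟩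
  refine ⟨hUopen, fun i p₀ hp₀ => ?_⟩
  rw [hU] at hp₀
  obtain ⟨ε, hε, hne⟩ := key p₀ hp₀
  set F : ℂ × ℂ → ℝ → ℂ := fun p t =>
    γ₁ t ^ i * (deriv γ₂ t - p.2 * deriv γ₁ t) / (γ₂ t - p.1 - p.2 * γ₁ t) with hF
  set F' : ℂ × ℂ → ℝ → (ℂ × ℂ) →L[ℂ] ℂ := fun p t =>
    (γ₁ t ^ i * (deriv γ₂ t - p.2 * deriv γ₁ t)) •
        ((-((γ₂ t - p.1 - p.2 * γ₁ t) ^ 2)⁻¹) •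
          ((-(ContinuousLinearMap.fst ℂ ℂ ℂ)) - (γ₁ t) • ContinuousLinearMap.snd ℂ ℂ ℂ))
      + ((γ₂ t - p.1 - p.2 * γ₁ t)⁻¹) •
          ((γ₁ t ^ i) • (-((deriv γ₁ t) • ContinuousLinearMap.snd ℂ ℂ ℂ))) with hF'
  clear_value F F'
  have hderivF : ∀ (x : ℂ × ℂ) (t : ℝ), γ₂ t - x.1 - x.2 * γ₁ t ≠ 0 →
      HasFDerivAt (fun p => F p t) (F' x t) x := by
    intro x t hxt
    have hN : HasFDerivAt (fun p : ℂ × ℂ => γ₁ t ^ i * (deriv γ₂ t - p.2 * deriv γ₁ t))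
        ((γ₁ t ^ i) • (-((deriv γ₁ t) • ContinuousLinearMap.snd ℂ ℂ ℂ))) x :=
      ((hasFDerivAt_snd.mul_const (deriv γ₁ t)).const_sub (deriv γ₂ t)).const_mul _
    have hQ : HasFDerivAt (fun p : ℂ × ℂ => γ₂ t - p.1 - p.2 * γ₁ t)
        ((-(ContinuousLinearMap.fst ℂ ℂ ℂ)) - (γ₁ t) • ContinuousLinearMap.snd ℂ ℂ ℂ) x :=
      (hasFDerivAt_fst.const_sub (γ₂ t)).sub (hasFDerivAt_snd.mul_const (γ₁ t))
    have hinv : HasFDerivAt (fun p : ℂ × ℂ => (γ₂ t - p.1 - p.2 * γ₁ t)⁻¹)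
        ((-((γ₂ t - x.1 - x.2 * γ₁ t) ^ 2)⁻¹) •
          ((-(ContinuousLinearMap.fst ℂ ℂ ℂ)) - (γ₁ t) • ContinuousLinearMap.snd ℂ ℂ ℂ)) x :=
      (hasDerivAt_inv hxt).comp_hasFDerivAt x hQ
    have h := hN.fun_mul hinv
    rw [hF, hF']
    simpa only [div_eq_mul_inv] using h
  -- the compact set and the bound
  set s : Set ((ℂ × ℂ) × ℝ) := Metric.closedBall p₀ ε ×ˢ Set.Icc (0:ℝ) 1 with hs
  have hQne' : ∀ q ∈ s, γ₂ q.2 - q.1.1 - q.1.2 * γ₁ q.2 ≠ 0 := fun q hq =>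
    hne q.1 hq.1 q.2 hq.2
  have hscomp : IsCompact s := (isCompact_closedBall _ _).prod isCompact_Icc
  have hsne : s.Nonempty :=
    ⟨(p₀, 0), Set.mk_mem_prod (Metric.mem_closedBall_self hε.le) (by norm_num)⟩
  have hF'cont : ContinuousOn (fun q : (ℂ × ℂ) × ℝ => F' q.1 q.2) s := by
    simp only [hF']
    apply ContinuousOn.add
    · apply ContinuousOn.fun_smul
      · fun_prop
      · apply ContinuousOn.fun_smul
        · exact (((hQcont.continuousOn (s := s)).pow 2).inv₀
            (fun q hq => pow_ne_zero _ (hQne' q hq))).neg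
        · fun_prop
    · apply ContinuousOn.fun_smul
      · exact (hQcont.continuousOn (s := s)).inv₀ hQne'
      · fun_prop
  obtain ⟨q₀, hq₀, hmax⟩ := hscomp.exists_isMaxOn hsne hF'cont.norm
  -- apply differentiation under the integral sign
  have hIsub : Set.uIoc (0:ℝ) 1 ⊆ Set.Icc (0:ℝ) 1 := by
    rw [Set.uIoc_of_le zero_le_one]
    exact Set.Ioc_subset_Icc_self
  have meas1 : ∀ᶠ x in nhds p₀, AEStronglyMeasurable (F x)
      (volume.restrict (Set.uIoc (0:ℝ) 1)) := by
    filter_upwards with x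
    apply Measurable.aestronglyMeasurable
    simp only [hF]
    apply Measurable.div <;> fun_prop
  have int1 : IntervalIntegrable (F p₀) volume 0 1 := by
    apply ContinuousOn.intervalIntegrable
    rw [Set.uIcc_of_le zero_le_one]
    simp only [hF]
    exact ContinuousOn.div (by fun_prop) (by fun_prop)
      (fun t ht => hne p₀ (Metric.mem_closedBall_self hε.le) t ht)
  have meas2 : AEStronglyMeasurable (F' p₀) (volume.restrict (Set.uIoc (0:ℝ) 1)) := by
    apply ContinuousOn.aestronglyMeasurable _ measurableSet_uIoc
    have hcc : ContinuousOn (fun t : ℝ => F' p₀ t) (Set.Icc (0:ℝ) 1) := by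
      have hmap : Set.MapsTo (fun t : ℝ => ((p₀ : ℂ × ℂ), t)) (Set.Icc (0:ℝ) 1) s :=
        fun t ht => Set.mk_mem_prod (Metric.mem_closedBall_self hε.le) ht
      have hpc : Continuous (fun t : ℝ => ((p₀ : ℂ × ℂ), t)) :=
        continuous_const.prodMk continuous_id
      exact hF'cont.comp hpc.continuousOn hmap
    exact hcc.mono hIsub
  have bnd : ∀ᵐ t ∂(volume : MeasureTheory.Measure ℝ), t ∈ Set.uIoc (0:ℝ) 1 →
      ∀ x ∈ Metric.ball p₀ ε, ‖F' x t‖ ≤ ‖F' q₀.1 q₀.2‖ := by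
    filter_upwards with t ht x hx
    exact isMaxOn_iff.mp hmax (x, t) (Set.mk_mem_prod (Metric.ball_subset_closedBall hx) (hIsub ht))
  have bint : IntervalIntegrable (fun _ : ℝ => ‖F' q₀.1 q₀.2‖) volume 0 1 :=
    intervalIntegrable_const
  have hdiff : ∀ᵐ t ∂(volume : MeasureTheory.Measure ℝ), t ∈ Set.uIoc (0:ℝ) 1 →
      ∀ x ∈ Metric.ball p₀ ε, HasFDerivAt (fun p => F p t) (F' x t) x := by
    filter_upwards with t ht x hx
    exact hderivF x t (hne x (Metric.ball_subset_closedBall hx) t (hIsub ht))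
  have hmain : HasFDerivAt (fun x => ∫ t in (0:ℝ)..1, F x t) (∫ t in (0:ℝ)..1, F' p₀ t) p₀ :=
    intervalIntegral.hasFDerivAt_integral_of_dominated_of_fderiv_le (Metric.ball_mem_nhds p₀ hε) meas1 int1 meas2
      bnd bint hdiff
  have hGeq : G i = fun p => (1 / (2 * (Real.pi : ℂ) * Complex.I)) *
      ∫ t in (0:ℝ)..1, F p t := funext fun p => by rw [hG i p]; simp only [hF]
  rw [hGeq]
  exact hmain.differentiableAt.const_mul _
end

section
/- Define F : ℂ³ → ℝ³ by F(z₁, z₂, z₃) = (Im z₂, Im z₃, |z₁|² + (Re z₂)² + (Re z₃)² − 1), so that Γ := F⁻¹(0) is Henkin's example {y₂ = y₃ = 0, x₁² + y₁² + x₂² + x₃² = 1}, and let p = (1, 0, 0) ∈ Γ. Then the real tangent space of Γ at p contains no complex line: for every v ∈ ℂ³, if (fderiv_ℝ F p)(v) = 0 and (fderiv_ℝ F p)(i·v) = 0, then v = 0. (Here the kernel of the real Fréchet derivative of F at p is the tangent space of Γ at p; hence Γ is not maximally complex, and in particular Γ cannot be the boundary of a complex submanifold although it satisfies conditions 1–3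 of the main theorem.) -/
open ContinuousLinearMap

/-- Henkin's example `Γ = F⁻¹(0)` with
`F(z₁,z₂,z₃) = (Im z₂, Im z₃, |z₁|² + (Re z₂)² + (Re z₃)² - 1)` is not maximally complex:
at `p = (1,0,0)` the real tangent space `ker (fderiv ℝ F p)` contains no complex line. -/
theorem henkin_example_not_maximally_complex
    (F : ℂ × ℂ × ℂ → ℝ × ℝ × ℝ)
    (hF : F = fun z : ℂ × ℂ × ℂ =>
      (z.2.1.im, z.2.2.im, ‖z.1‖ ^ 2 + z.2.1.re ^ 2 + z.2.2.re ^ 2 - 1)) :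
    ∀ v : ℂ × ℂ × ℂ,
      fderiv ℝ F ((1 : ℂ), (0 : ℂ), (0 : ℂ)) v = 0 →
      fderiv ℝ F ((1 : ℂ), (0 : ℂ), (0 : ℂ)) (Complex.I • v) = 0 →
      v = 0 := by
  subst hF
  set R1 : ℂ × ℂ × ℂ →L[ℝ] ℝ := Complex.reCLM.comp (fst ℝ ℂ (ℂ × ℂ)) with hR1
  set I1 : ℂ × ℂ × ℂ →L[ℝ] ℝ := Complex.imCLM.comp (fst ℝ ℂ (ℂ × ℂ)) with hI1
  set R2 : ℂ × ℂ × ℂ →L[ℝ] ℝ :=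
    Complex.reCLM.comp ((fst ℝ ℂ ℂ).comp (snd ℝ ℂ (ℂ × ℂ))) with hR2
  set I2 : ℂ × ℂ × ℂ →L[ℝ] ℝ :=
    Complex.imCLM.comp ((fst ℝ ℂ ℂ).comp (snd ℝ ℂ (ℂ × ℂ))) with hI2
  set R3 : ℂ × ℂ × ℂ →L[ℝ] ℝ :=
    Complex.reCLM.comp ((snd ℝ ℂ ℂ).comp (snd ℝ ℂ (ℂ × ℂ))) with hR3
  set I3 : ℂ × ℂ × ℂ →L[ℝ] ℝ :=
    Complex.imCLM.comp ((snd ℝ ℂ ℂ).comp (snd ℝ ℂ (ℂ × ℂ))) with hI3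
  set p : ℂ × ℂ × ℂ := ((1 : ℂ), (0 : ℂ), (0 : ℂ)) with hp
  have hR1d : HasFDerivAt (fun z : ℂ × ℂ × ℂ => z.1.re) R1 p :=
    R1.hasFDerivAt
  have hI1d : HasFDerivAt (fun z : ℂ × ℂ × ℂ => z.1.im) I1 p :=
    I1.hasFDerivAt
  have hR2d : HasFDerivAt (fun z : ℂ × ℂ × ℂ => z.2.1.re) R2 p :=
    R2.hasFDerivAt
  have hI2d : HasFDerivAt (fun z : ℂ × ℂ × ℂ => z.2.1.im) I2 p :=
    I2.hasFDerivAt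
  have hR3d : HasFDerivAt (fun z : ℂ × ℂ × ℂ => z.2.2.re) R3 p :=
    R3.hasFDerivAt
  have hI3d : HasFDerivAt (fun z : ℂ × ℂ × ℂ => z.2.2.im) I3 p :=
    I3.hasFDerivAt
  have h3 : HasFDerivAt
      (fun z : ℂ × ℂ × ℂ =>
        ‖z.1‖ ^ 2 + z.2.1.re ^ 2 + z.2.2.re ^ 2 - 1)
      ((2 : ℝ) • R1) p := by
    have heq : (fun z : ℂ × ℂ × ℂ =>
        ‖z.1‖ ^ 2 + z.2.1.re ^ 2 + z.2.2.re ^ 2 - 1)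
        = fun z : ℂ × ℂ × ℂ =>
          (z.1.re * z.1.re + z.1.im * z.1.im) + z.2.1.re * z.2.1.re
            + z.2.2.re * z.2.2.re - 1 := by
      funext z
      rw [Complex.sq_norm, Complex.normSq_apply]
      ring
    rw [heq]
    have h := ((((hR1d.mul hR1d).add (hI1d.mul hI1d)).add (hR2d.mul hR2d)).add
      (hR3d.mul hR3d)).sub_const 1
    have hL : p.1.re • R1 + p.1.re • R1 + (p.1.im • I1 + p.1.im • I1)
        + (p.2.1.re • R2 + p.2.1.re • R2) + (p.2.2.re • R3 + p.2.2.re • R3)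
        = (2 : ℝ) • R1 := by
      refine ContinuousLinearMap.ext fun w => ?_
      simp [hp, hR1, hI1, hR2, hR3, two_smul]
    rw [hL] at h
    exact h
  have hd : HasFDerivAt
      (fun z : ℂ × ℂ × ℂ =>
        (z.2.1.im, z.2.2.im, ‖z.1‖ ^ 2 + z.2.1.re ^ 2 + z.2.2.re ^ 2 - 1))
      (I2.prod (I3.prod ((2 : ℝ) • R1))) p :=
    hI2d.prodMk (hI3d.prodMk h3)
  intro v h1 h2
  rw [hd.fderiv] at h1 h2
  simp only [prod_apply, coe_smul', Pi.smul_apply, hI2, hI3, hR1, comp_apply,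
    coe_fst', coe_snd', Complex.reCLM_apply, Complex.imCLM_apply,
    Prod.mk_eq_zero, smul_eq_mul, Prod.smul_fst, Prod.smul_snd,
    Complex.smul_re, Complex.smul_im] at h1 h2
  obtain ⟨h1a, h1b, h1c⟩ := h1
  obtain ⟨h2a, h2b, h2c⟩ := h2
  have e1 : v.1 = 0 := by
    apply Complex.ext <;> simp_all [Complex.mul_re, Complex.mul_im]
  have e2 : v.2.1 = 0 := by
    apply Complex.ext <;> simp_all [Complex.mul_im]
  have e3 : v.2.2 = 0 := by
    apply Complex.ext <;> simp_all [Complex.mul_im]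
  exact Prod.ext e1 (Prod.ext e2 e3)
end
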